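/- arXiv:1908.03045 — 2 statements merged into one kernel-verified Lean document; each statement's English description precedes it below -/
import Mathlib

section
/- Let k,n be positive integers, let 𝒱 ⊆ {0,1,…,k−1}^n ⊆ ℚ^n be a finite point set and let ≺ be the lexicographic term order on the monomials of ℚ[x_1,…,x_n] induced by the variable ordering x_{i_1} ≻ x_{i_2} ≻ ⋯ ≻ x_{i_n}. Then, identifying each monomial x^w = x_1^{w_1}⋯x_n^{w_n} with its exponent vector w ∈ ℕ^n, the set of standard monomials satisfies Sm(I(𝒱)) = D_{i_n, i_{n−1}, …, i_1}(𝒱). -/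
open MvPolynomial

/-- Monomials of `𝔽[x_1,…,x_n]` identified with their exponent vectors. -/
abbrev Mon (n : ℕ) := Fin n →₀ ℕ

/-- A linear order on monomials is a term order if `1` (i.e. the zero exponent
vector) is minimal and the order is compatible with multiplication by monomials. -/
def IsTermOrder {n : ℕ} (lin : LinearOrder (Mon n)) : Prop :=
  (∀ u : Mon n, lin.le 0 u) ∧
    ∀ u v w : Mon n, lin.le u v → lin.le (u + w) (v + w)

/-- The strict lexicographic comparison of exponent vectors induced by the variable
ordering `x_{σ 0} ≻ x_{σ 1} ≻ ⋯ ≻ x_{σ (n-1)}`. -/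
def lexLt {n : ℕ} (σ : Equiv.Perm (Fin n)) (u v : Mon n) : Prop :=
  ∃ j : Fin n, u (σ j) < v (σ j) ∧ ∀ i : Fin n, i < j → u (σ i) = v (σ i)

/-- `lin` is the lexicographic term order induced by the variable ordering
`x_{σ 0} ≻ x_{σ 1} ≻ ⋯ ≻ x_{σ (n-1)}`. -/
def IsLexOrder {n : ℕ} (σ : Equiv.Perm (Fin n)) (lin : LinearOrder (Mon n)) : Prop :=
  ∀ u v : Mon n, lin.lt u v ↔ lexLt σ u v

/-- `m` is the leading monomial of `f` with respect to the monomial order `lin`. -/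
def IsLeadMon {n : ℕ} {F : Type*} [CommSemiring F] (lin : LinearOrder (Mon n))
    (f : MvPolynomial (Fin n) F) (m : Mon n) : Prop :=
  m ∈ f.support ∧ ∀ m' ∈ f.support, lin.le m' m

/-- The set of standard monomials of an ideal `I` with respect to the monomial
order `lin`: monomials that are not the leading monomial of any nonzero `f ∈ I`. -/
def stdMon {n : ℕ} {F : Type*} [CommSemiring F] (lin : LinearOrder (Mon n))
    (I : Ideal (MvPolynomial (Fin n) F)) : Set (Mon n) :=
  { m | ¬ ∃ f ∈ I, f ≠ 0 ∧ IsLeadMon lin f m }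

/-- The vanishing ideal of a point set `V ⊆ F^n`. -/
def vanishIdeal {n : ℕ} {F : Type*} [CommRing F] (V : Set (Fin n → F)) :
    Ideal (MvPolynomial (Fin n) F) where
  carrier := { f | ∀ v ∈ V, MvPolynomial.eval v f = 0 }
  add_mem' := by
    intro a b ha hb v hv
    simp [map_add, ha v hv, hb v hv]
  zero_mem' := by intro v hv; simp
  smul_mem' := by
    intro c f hf v hv
    simp [smul_eq_mul, hf v hv]

/-- A finite point set (in `{0,…,k-1}^n`, over any field) is extremal if its vanishing
ideal has the same standard monomials for every lexicographic term order. -/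
def IsExtremal {n : ℕ} {F : Type*} [CommRing F] (V : Set (Fin n → F)) : Prop :=
  ∀ (σ₁ σ₂ : Equiv.Perm (Fin n)) (lin₁ lin₂ : LinearOrder (Mon n)),
    IsLexOrder σ₁ lin₁ → IsLexOrder σ₂ lin₂ →
      stdMon lin₁ (vanishIdeal V) = stdMon lin₂ (vanishIdeal V)

/-- Embedding of a point of `{0,…,k-1}^n` into `F^n`. -/
def toField {n k : ℕ} (F : Type*) [Field F] (w : Fin n → Fin k) : Fin n → F :=
  fun i => ((w i : ℕ) : F)

/-- Identification of a point of `{0,…,k-1}^n` with an exponent vector in `ℕ^n`. -/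
noncomputable def toExp {n k : ℕ} (w : Fin n → Fin k) : Mon n :=
  Finsupp.equivFunOnFinite.symm fun i => (w i : ℕ)

/-- The downshift `D_i(V)` of `V ⊆ {0,…,k-1}^n` at coordinate `i`: its `i`-section at
each choice of the other coordinates is `{0,1,…,m-1}` where `m` is the size of the
corresponding `i`-section of `V`. -/
def downshift {n k : ℕ} (V : Finset (Fin n → Fin k)) (i : Fin n) :
    Finset (Fin n → Fin k) :=
  Finset.univ.filter fun w =>
    (w i : ℕ) < (Finset.univ.filter fun α : Fin k => Function.update w i α ∈ V).card

/-- The iterated downshift `D_{σ(n-1)}(D_{σ(n-2)}(⋯(D_{σ 0}(V))))`,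
i.e. downshifts are applied at coordinates `σ 0, σ 1, …, σ (n-1)` in this order. -/
def iterDownshift {n k : ℕ} (σ : Equiv.Perm (Fin n)) (V : Finset (Fin n → Fin k)) :
    Finset (Fin n → Fin k) :=
  (List.ofFn fun j : Fin n => σ j).foldl downshift V

/-- A polynomial is degree dominated (with dominating term `x^w`) if it equals
`x^w + Σ αᵢ x^{vᵢ}` where each `x^{vᵢ}` divides `x^w`. -/
def IsDegDominated {n : ℕ} {F : Type*} [CommSemiring F]
    (f : MvPolynomial (Fin n) F) : Prop :=
  ∃ w : Mon n, MvPolynomial.coeff w f = 1 ∧ ∀ v ∈ f.support, v ≤ w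

/-- `G` is a Gröbner basis of `I` with respect to the monomial order `lin`:
`G ⊆ I` and for every nonzero `f ∈ I` some `g ∈ G` has leading monomial dividing
the leading monomial of `f` (divisibility of monomials being `≤` of exponents). -/
def IsGroebner {n : ℕ} {F : Type*} [CommSemiring F] (lin : LinearOrder (Mon n))
    (G : Finset (MvPolynomial (Fin n) F)) (I : Ideal (MvPolynomial (Fin n) F)) : Prop :=
  (∀ g ∈ G, g ∈ I) ∧
    ∀ f ∈ I, f ≠ 0 → ∀ m : Mon n, IsLeadMon lin f m →
      ∃ g ∈ G, ∃ mg : Mon n, IsLeadMon lin g mg ∧ mg ≤ m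

/-- `G` is a universal Gröbner basis of `I` if it is a Gröbner basis for every term order. -/
def IsUnivGroebner {n : ℕ} {F : Type*} [CommSemiring F]
    (G : Finset (MvPolynomial (Fin n) F)) (I : Ideal (MvPolynomial (Fin n) F)) : Prop :=
  ∀ lin : LinearOrder (Mon n), IsTermOrder lin → IsGroebner lin G I

/-- A term order is an elimination order with respect to `x_i` if `x_i` is greater
than every monomial not involving `x_i`. -/
def IsElimOrder {n : ℕ} (lin : LinearOrder (Mon n)) (i : Fin n) : Prop :=
  IsTermOrder lin ∧ ∀ m : Mon n, m i = 0 → lin.lt m (Finsupp.single i 1)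

/-- A set system `𝓕` shatters `S` if every subset of `S` is the intersection of `S`
with a member of `𝓕`. -/
def Shatters {n : ℕ} (𝓕 : Finset (Finset (Fin n))) (S : Finset (Fin n)) : Prop :=
  ∀ T ⊆ S, ∃ Fm ∈ 𝓕, Fm ∩ S = T

open scoped Classical in
/-- The family `Sh(𝓕)` of sets shattered by `𝓕`. -/
noncomputable def shatteredFamily {n : ℕ} (𝓕 : Finset (Finset (Fin n))) :
    Finset (Finset (Fin n)) :=
  Finset.univ.filter fun S => Shatters 𝓕 S

/-- A set system is shattering-extremal if it shatters exactly `|𝓕|` sets. -/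
def IsSExtremal {n : ℕ} (𝓕 : Finset (Finset (Fin n))) : Prop :=
  (shatteredFamily 𝓕).card = 𝓕.card

/-- The characteristic vector of a set, as a point of `F^n`. -/
def charVec {n : ℕ} (F : Type*) [Field F] (Fm : Finset (Fin n)) : Fin n → F :=
  fun i => if i ∈ Fm then 1 else 0

/-- The squarefree monomial `∏_{i ∈ S} x_i` associated to a set `S ⊆ [n]`,
as an exponent vector. -/
noncomputable def setMon {n : ℕ} (S : Finset (Fin n)) : Mon n :=
  Finsupp.equivFunOnFinite.symm fun i => if i ∈ S then 1 else 0

/-- The polynomial `f_{S,H} = (∏_{i∈H} x_i) ⬝ ∏_{i∈S∖H} (x_i - 1)`. -/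
noncomputable def fSH {n : ℕ} (F : Type*) [Field F] (S H : Finset (Fin n)) :
    MvPolynomial (Fin n) F :=
  (∏ i ∈ H, X i) * ∏ i ∈ S \ H, (X i - 1)

/-- The downshift `D_i(𝓕)` of a set system. -/
def dshiftSet {n : ℕ} (𝓕 : Finset (Finset (Fin n))) (i : Fin n) :
    Finset (Finset (Fin n)) :=
  𝓕.image (fun Fm => Fm.erase i) ∪ 𝓕.filter fun Fm => i ∈ Fm ∧ Fm.erase i ∈ 𝓕

/-- The iterated downshift `D_{σ(n-1)}(⋯(D_{σ 0}(𝓕)))` of a set system: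
downshifts are applied at `σ 0, σ 1, …, σ (n-1)` in this order. -/
def iterDshiftSet {n : ℕ} (σ : Equiv.Perm (Fin n)) (𝓕 : Finset (Finset (Fin n))) :
    Finset (Finset (Fin n)) :=
  (List.ofFn fun j : Fin n => σ j).foldl dshiftSet 𝓕

/-- Restriction of an exponent vector in `ℕ^{n+1}` to its first `n` coordinates. -/
noncomputable def restrictMon {n : ℕ} (w : Mon (n + 1)) : Mon n :=
  Finsupp.equivFunOnFinite.symm fun i => w i.castSucc

/-
Downshifts preserve cardinality, and `I(V)` has at most `|V|` standard monomials for any order: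
more monomials are linearly dependent as functions on `V`, which yields a nonzero polynomial
of `I(V)` whose leading monomial is one of them. So it suffices that every point `u` of
`D = D_{σ(n-1)}(⋯(D_{σ 0}(V)))` is standard. Suppose `f ∈ I(V)` has leading monomial `x^u`,
let `i = σ 0` and `d = u_i`. As `x_i` is the most significant variable, every monomial of `f`
has `x_i`-degree at most `d`, so on a line in direction `x_i` meeting `V` in more than `d` points
the restriction of `f` vanishes identically and its coefficient of `x_i^d` is zero. Hence the coefficient `g` of `x_i^d` in `f` vanishes on
the `d`-th level of `D_i(V)`, whose remaining downshifts contain `u`, and by induction on the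
list of variables the coefficient of `x^u` in `f`, which is that of `x^{u - d e_i}` in `g`,
is zero.
-/

open Finset

section StandardMonomials

variable {n : ℕ} {F : Type*}

theorem exists_isLeadMon [CommSemiring F] (lin : LinearOrder (Mon n))
    {f : MvPolynomial (Fin n) F} (hf : f ≠ 0) : ∃ m, IsLeadMon lin f m := by
  obtain ⟨m, hm, hmax⟩ :=
    @exists_max_image _ _ lin f.support id (support_nonempty.mpr hf)
  exact ⟨m, hm, hmax⟩

theorem exists_ne_zero_mem_vanishIdeal_support_subset [Field F] (P : Finset (Fin n → F))
    (S : Finset (Mon n)) (hPS : #P < #S) :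
    ∃ f ∈ vanishIdeal (P : Set (Fin n → F)), f ≠ 0 ∧ (f.support : Set (Mon n)) ⊆ S := by
  let evalAtP : restrictSupport F (S : Set (Mon n)) →ₗ[F] (P → F) :=
    (LinearMap.pi fun p : P => (aeval p.1).toLinearMap) ∘ₗ (restrictSupport F _).subtype
  have b := basisRestrictSupport F (S : Set (Mon n))
  have := Module.Finite.of_basis b
  have hrank :
      Module.finrank F (P → F) < Module.finrank F (restrictSupport F (S : Set (Mon n))) := by
    simpa [Module.finrank_eq_card_basis b] using hPS
  obtain ⟨⟨f, hfS⟩, hker, hf0⟩ := Submodule.exists_mem_ne_zero_of_ne_bot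
    (LinearMap.ker_ne_bot_of_finrank_lt hrank (f := evalAtP))
  refine ⟨f, fun p hp => ?_, by simpa using hf0, hfS⟩
  simpa [evalAtP] using congr_fun hker ⟨p, hp⟩

theorem card_le_of_subset_stdMon [Field F] (lin : LinearOrder (Mon n))
    (P : Finset (Fin n → F)) (S : Finset (Mon n))
    (hS : (S : Set (Mon n)) ⊆ stdMon lin (vanishIdeal (P : Set (Fin n → F)))) :
    #S ≤ #P := by
  by_contra! hPS
  obtain ⟨f, hfP, hf0, hfS⟩ := exists_ne_zero_mem_vanishIdeal_support_subset P S hPS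
  obtain ⟨m, hm⟩ := exists_isLeadMon lin hf0
  exact hS (hfS hm.1) ⟨f, hfP, hf0, hm⟩

end StandardMonomials

theorem lexLt_iff_lex_ofFn {n : ℕ} (σ : Equiv.Perm (Fin n)) (u v : Mon n) :
    lexLt σ u v ↔
      List.Lex (· < ·) (List.ofFn fun j => u (σ j)) (List.ofFn fun j => v (σ j)) := by
  rw [List.lex_lt, List.lt_iff_exists]
  simp only [lexLt, Fin.exists_iff, List.length_ofFn, List.getElem_ofFn, lt_irrefl, and_false,
    false_or, Fin.forall_iff, Fin.lt_def]
  constructor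
  · rintro ⟨j, hj, hlt, heq⟩
    exact ⟨j, hj, hj, fun i hi => heq i (by omega) hi, hlt⟩
  · rintro ⟨j, hj, _, heq, hlt⟩
    exact ⟨j, hj, hlt, fun i hi => heq i⟩

section CoeffVarPow

variable {ι R : Type*}

theorem Finsupp.erase_eq_iff_eq_add_single {M : Type*} [AddZeroClass M] {i : ι} {d : M}
    {m m' : ι →₀ M} (hm : m i = 0) (hm' : m' i = d) :
    m'.erase i = m ↔ m' = m + Finsupp.single i d := by
  constructor
  · rintro rfl
    rw [← hm', Finsupp.erase_add_single]
  · rintro rfl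
    simp [Finsupp.erase_of_notMem_support, hm]

noncomputable def coeffVarPow [CommSemiring R] (i : ι) (d : ℕ) (f : MvPolynomial ι R) :
    MvPolynomial ι R :=
  ∑ m ∈ f.support with m i = d, monomial (m.erase i) (coeff m f)

theorem coeff_coeffVarPow [CommSemiring R] [DecidableEq ι] (i : ι) (d : ℕ)
    (f : MvPolynomial ι R) (m : ι →₀ ℕ) :
    coeff m (coeffVarPow i d f) = if m i = 0 then coeff (m + Finsupp.single i d) f else 0 := by
  simp only [coeffVarPow, coeff_sum, coeff_monomial]
  split_ifs with hm
  · rw [sum_congr rfl fun m' hm' => if_congr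
      (Finsupp.erase_eq_iff_eq_add_single hm (mem_filter.mp hm').2) rfl rfl, sum_ite_eq']
    split_ifs with hmem
    · rfl
    · exact (notMem_support_iff.mp fun h => hmem (mem_filter.mpr ⟨h, by simp [hm]⟩)).symm
  · refine sum_eq_zero fun m' _ => if_neg ?_
    rintro rfl
    exact hm Finsupp.erase_same

theorem mem_support_coeffVarPow [CommSemiring R] [DecidableEq ι] {i : ι} {d : ℕ}
    {f : MvPolynomial ι R} {m : ι →₀ ℕ} :
    m ∈ (coeffVarPow i d f).support ↔ m i = 0 ∧ m + Finsupp.single i d ∈ f.support := by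
  rw [mem_support_iff, mem_support_iff, coeff_coeffVarPow]
  split_ifs with hm <;> simp [hm]

variable [Fintype ι] [CommSemiring R]

noncomputable def restrictLine (p : ι → R) (i : ι) (f : MvPolynomial ι R) : Polynomial R :=
  ∑ m ∈ f.support, Polynomial.C (coeff m f * ∏ j, p j ^ m.erase i j) * Polynomial.X ^ m i

theorem natDegree_restrictLine_le (p : ι → R) (i : ι) {f : MvPolynomial ι R} {d : ℕ}
    (hd : ∀ m ∈ f.support, m i ≤ d) : (restrictLine p i f).natDegree ≤ d :=
  Polynomial.natDegree_sum_le_of_forall_le _ _ fun m hm =>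
    (Polynomial.natDegree_C_mul_X_pow_le _ _).trans (hd m hm)

theorem coeff_restrictLine (p : ι → R) (i : ι) (f : MvPolynomial ι R) (d : ℕ) :
    (restrictLine p i f).coeff d = eval p (coeffVarPow i d f) := by
  rw [restrictLine, Polynomial.finsetSum_coeff, coeffVarPow, map_sum, sum_filter]
  refine sum_congr rfl fun m _ => ?_
  rw [Polynomial.coeff_C_mul_X_pow, eval_monomial, Finsupp.prod_fintype _ _ fun j => pow_zero _]
  simp only [eq_comm (a := d)]

variable [DecidableEq ι]

theorem prod_update_pow (p : ι → R) (i : ι) (t : R) (m : ι →₀ ℕ) :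
    ∏ j, Function.update p i t j ^ m j = (∏ j, p j ^ m.erase i j) * t ^ m i := by
  rw [← mul_prod_erase _ _ (mem_univ i), ← mul_prod_erase _ _ (mem_univ i)]
  simp only [Function.update_self, Finsupp.erase_same, pow_zero, one_mul]
  rw [mul_comm]
  congr 1
  refine prod_congr rfl fun j hj => ?_
  rw [Function.update_of_ne (ne_of_mem_erase hj), Finsupp.erase_ne (ne_of_mem_erase hj)]

theorem eval_restrictLine (p : ι → R) (i : ι) (f : MvPolynomial ι R) (t : R) :
    (restrictLine p i f).eval t = eval (Function.update p i t) f := by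
  rw [restrictLine, Polynomial.eval_finsetSum, eval_eq']
  refine sum_congr rfl fun m _ => ?_
  rw [Polynomial.eval_mul, Polynomial.eval_C, Polynomial.eval_pow, Polynomial.eval_X,
    prod_update_pow, mul_assoc]

end CoeffVarPow

theorem eval_coeffVarPow_eq_zero {ι R : Type*} [Fintype ι] [DecidableEq ι] [CommRing R]
    [IsDomain R] (p : ι → R) (i : ι) {f : MvPolynomial ι R} {d : ℕ}
    (hd : ∀ m ∈ f.support, m i ≤ d) (s : Finset R) (hs : d < #s)
    (hf : ∀ t ∈ s, eval (Function.update p i t) f = 0) : eval p (coeffVarPow i d f) = 0 := by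
  have hline : restrictLine p i f = 0 :=
    Polynomial.eq_zero_of_natDegree_lt_card_of_eval_eq_zero' _ s
      (fun t ht => (eval_restrictLine p i f t).trans (hf t ht))
      ((natDegree_restrictLine_le p i hd).trans_lt hs)
  rw [← coeff_restrictLine, hline, Polynomial.coeff_zero]

section Downshift

variable {n k : ℕ}

def coordSection (V : Finset (Fin n → Fin k)) (i : Fin n) (w : Fin n → Fin k) :
    Finset (Fin k) :=
  {α | Function.update w i α ∈ V}

@[simp] theorem mem_coordSection {V : Finset (Fin n → Fin k)} {i : Fin n}
    {w : Fin n → Fin k} {α : Fin k} : α ∈ coordSection V i w ↔ Function.update w i α ∈ V := by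
  simp [coordSection]

@[simp] theorem coordSection_update (V : Finset (Fin n → Fin k)) (i : Fin n)
    (w : Fin n → Fin k) (α : Fin k) :
    coordSection V i (Function.update w i α) = coordSection V i w := by
  ext; simp

theorem mem_downshift {V : Finset (Fin n → Fin k)} {i : Fin n} {w : Fin n → Fin k} :
    w ∈ downshift V i ↔ (w i : ℕ) < #(coordSection V i w) := by
  simp [downshift, coordSection]

theorem card_coordSection_downshift (V : Finset (Fin n → Fin k)) (i : Fin n)
    (w : Fin n → Fin k) : #(coordSection (downshift V i) i w) = #(coordSection V i w) := by
  have : coordSection (downshift V i) i w =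
      ({α | (α : ℕ) < #(coordSection V i w)} : Finset (Fin k)) := by
    ext α; simp [mem_downshift]
  rw [this, Fin.card_filter_val_lt, min_eq_right (card_le_univ _ |>.trans_eq (Fintype.card_fin k))]

theorem card_filter_update_eq_card_coordSection (W : Finset (Fin n → Fin k)) {i : Fin n}
    {z : Fin k} {b : Fin n → Fin k} (hb : b i = z) :
    #{w ∈ W | Function.update w i z = b} = #(coordSection W i b) := by
  rw [← card_image_of_injective _ (Function.update_injective b i)]
  congr 1
  ext w
  simp only [mem_filter, mem_image, mem_coordSection]
  constructor
  · rintro ⟨hw, rfl⟩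
    exact ⟨w i, by simpa using hw, by simp⟩
  · rintro ⟨α, hα, rfl⟩
    exact ⟨hα, by simp [← hb]⟩

theorem card_downshift (V : Finset (Fin n → Fin k)) (i : Fin n) : #(downshift V i) = #V := by
  rcases k.eq_zero_or_pos with rfl | hk
  · have : IsEmpty (Fin n → Fin 0) := ⟨fun w => (w i).elim0⟩
    simp [eq_empty_of_isEmpty]
  let z : Fin k := ⟨0, hk⟩
  have hmaps (W : Finset (Fin n → Fin k)) :
      ∀ w ∈ W, Function.update w i z ∈ ({b | b i = z} : Finset _) := by simp
  rw [card_eq_sum_card_fiberwise (hmaps _), card_eq_sum_card_fiberwise (hmaps V)]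
  refine sum_congr rfl fun b hb => ?_
  rw [mem_filter] at hb
  rw [card_filter_update_eq_card_coordSection _ hb.2,
    card_filter_update_eq_card_coordSection _ hb.2, card_coordSection_downshift]

theorem card_foldl_downshift (L : List (Fin n)) (V : Finset (Fin n → Fin k)) :
    #(L.foldl downshift V) = #V := by
  induction L generalizing V with
  | nil => rfl
  | cons i L ih => rw [List.foldl_cons, ih, card_downshift]

def levelSlice (W : Finset (Fin n → Fin k)) (i : Fin n) (d z : Fin k) :
    Finset (Fin n → Fin k) :=
  {b | b i = z ∧ Function.update b i d ∈ W}

@[simp] theorem mem_levelSlice {W : Finset (Fin n → Fin k)} {i : Fin n} {d z : Fin k}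
    {b : Fin n → Fin k} : b ∈ levelSlice W i d z ↔ b i = z ∧ Function.update b i d ∈ W := by
  simp [levelSlice]

theorem coordSection_levelSlice (W : Finset (Fin n → Fin k)) {i j : Fin n} (hji : j ≠ i)
    (d z : Fin k) (b : Fin n → Fin k) :
    coordSection (levelSlice W i d z) j b =
      if b i = z then coordSection W j (Function.update b i d) else ∅ := by
  ext α
  split_ifs with hb <;> simp [Function.update_of_ne hji.symm, Function.update_comm hji, hb]

theorem levelSlice_downshift (W : Finset (Fin n → Fin k)) {i j : Fin n} (hji : j ≠ i)
    (d z : Fin k) : levelSlice (downshift W j) i d z = downshift (levelSlice W i d z) j := by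
  ext b
  by_cases hb : b i = z <;>
    simp [mem_downshift, coordSection_levelSlice W hji, hb, Function.update_of_ne hji]

theorem levelSlice_foldl_downshift {L : List (Fin n)} {i : Fin n} (hi : i ∉ L)
    (W : Finset (Fin n → Fin k)) (d z : Fin k) :
    levelSlice (L.foldl downshift W) i d z = L.foldl downshift (levelSlice W i d z) := by
  induction L generalizing W with
  | nil => rfl
  | cons j L ih =>
    rw [List.mem_cons, not_or] at hi
    rw [List.foldl_cons, ih hi.2, List.foldl_cons, levelSlice_downshift W (Ne.symm hi.1)]

end Downshift

section Grid

variable {n k : ℕ} {F : Type*}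

theorem toExp_injective : Function.Injective (toExp : (Fin n → Fin k) → Mon n) :=
  fun _ _ h => funext fun i => Fin.val_injective (DFunLike.congr_fun h i)

theorem toExp_update_eq_erase (u : Fin n → Fin k) (i : Fin n) {z : Fin k} (hz : (z : ℕ) = 0) :
    toExp (Function.update u i z) = (toExp u).erase i := by
  ext j
  by_cases hj : j = i
  · subst hj; simp [toExp, hz]
  · simp [toExp, hj]

theorem toField_update [Field F] (w : Fin n → Fin k) (i : Fin n) (α : Fin k) :
    toField F (Function.update w i α) = Function.update (toField F w) i ((α : ℕ) : F) :=
  _root_.funext fun j => Function.apply_update (fun _ (a : Fin k) => ((a : ℕ) : F)) w i α j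

variable [Field F] [CharZero F]

theorem eval_coeffVarPow_toField_eq_zero {V : Finset (Fin n → Fin k)}
    {f : MvPolynomial (Fin n) F} (hf : ∀ v ∈ V, eval (toField F v) f = 0) {i : Fin n} {d : ℕ}
    (hd : ∀ m ∈ f.support, m i ≤ d) {b : Fin n → Fin k} (hb : d < #(coordSection V i b)) :
    eval (toField F b) (coeffVarPow i d f) = 0 := by
  classical
  have hcast : Function.Injective fun α : Fin k => ((α : ℕ) : F) :=
    Nat.cast_injective.comp Fin.val_injective
  refine eval_coeffVarPow_eq_zero _ i hd
    ((coordSection V i b).image fun α : Fin k => ((α : ℕ) : F))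
    (by rwa [card_image_of_injective _ hcast]) ?_
  simp only [mem_image, mem_coordSection]
  rintro _ ⟨α, hα, rfl⟩
  rw [← toField_update]
  exact hf _ hα

theorem coeff_toExp_eq_zero_of_mem_foldl_downshift {L : List (Fin n)} (hL : L.Nodup)
    {V : Finset (Fin n → Fin k)} {f : MvPolynomial (Fin n) F}
    (hf : ∀ v ∈ V, eval (toField F v) f = 0) (hvars : ∀ j ∈ f.vars, j ∈ L)
    {u : Fin n → Fin k} (hu : u ∈ L.foldl downshift V)
    (hlex : ∀ m ∈ f.support, ¬ List.Lex (· < ·) (L.map (toExp u)) (L.map m)) :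
    coeff (toExp u) f = 0 := by
  induction L generalizing V f u with
  | nil =>
    have hC : f = C (coeff 0 f) :=
      vars_eq_empty_iff_eq_C.mp (eq_empty_of_forall_notMem fun j hj => by simpa using hvars j hj)
    have h0 := hf u hu
    rw [hC, eval_C] at h0
    rw [hC, h0, C_0, coeff_zero]
  | cons i L ih =>
    obtain ⟨hiL, hL⟩ := List.nodup_cons.mp hL
    set d : ℕ := (u i : ℕ)
    set z : Fin k := ⟨0, (u i).pos⟩
    have hdeg : ∀ m ∈ f.support, m i ≤ d := fun m hm =>
      not_lt.mp fun hlt => hlex m hm (List.Lex.rel hlt)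
    have hcoeff :
        coeff (toExp u) f = coeff (toExp (Function.update u i z)) (coeffVarPow i d f) := by
      rw [coeff_coeffVarPow, toExp_update_eq_erase u i rfl, if_pos Finsupp.erase_same]
      exact congr_arg (coeff · f) (Finsupp.erase_add_single i _).symm
    rw [hcoeff]
    -- `coeffVarPow i d f` does not involve `x_i`: the induction continues on the `d`-th level
    -- of `D_i(V)`, moved to the hyperplane `x_i = 0`.
    refine ih hL (V := levelSlice (downshift V i) i (u i) z) ?_ ?_ ?_ ?_
    · intro b hb
      rw [mem_levelSlice, mem_downshift, Function.update_self, coordSection_update] at hb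
      exact eval_coeffVarPow_toField_eq_zero hf hdeg hb.2
    · intro j hj
      obtain ⟨m, hm, hjm⟩ := (mem_vars_iff_mem_support j).mp hj
      obtain ⟨hmi, hmf⟩ := mem_support_coeffVarPow.mp hm
      have hji : j ≠ i := by rintro rfl; exact Finsupp.mem_support_iff.mp hjm hmi
      have hjf : j ∈ f.vars := (mem_vars_iff_mem_support j).mpr
        ⟨_, hmf, by simpa [Finsupp.single_apply, Ne.symm hji] using hjm⟩
      exact (List.mem_cons.mp (hvars j hjf)).resolve_left hji
    · rw [← levelSlice_foldl_downshift hiL, mem_levelSlice]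
      simpa using hu
    · intro m hm hlt
      obtain ⟨hmi, hmf⟩ := mem_support_coeffVarPow.mp hm
      refine hlex _ hmf ?_
      have hhead : (m + Finsupp.single i d) i = toExp u i := by simp [hmi, d, toExp]
      rw [List.map_cons, List.map_cons, hhead]
      refine List.Lex.cons ?_
      convert hlt using 1 <;> refine List.map_congr_left fun j hj => ?_
      · rw [toExp_update_eq_erase u i rfl, Finsupp.erase_ne (ne_of_mem_of_not_mem hj hiL)]
      · simp [(ne_of_mem_of_not_mem hj hiL).symm]

theorem toExp_mem_stdMon_of_mem_iterDownshift [DecidableEq F] {σ : Equiv.Perm (Fin n)}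
    {lin : LinearOrder (Mon n)} (hlin : IsLexOrder σ lin) {V : Finset (Fin n → Fin k)}
    {u : Fin n → Fin k} (hu : u ∈ iterDownshift σ V) :
    toExp u ∈ stdMon lin (vanishIdeal ((V.image (toField F) : Finset (Fin n → F)) :
      Set (Fin n → F))) := by
  rintro ⟨f, hfV, -, hu_supp, hmax⟩
  refine mem_support_iff.mp hu_supp <| coeff_toExp_eq_zero_of_mem_foldl_downshift
    (List.nodup_ofFn.mpr σ.injective) (fun v hv => hfV _ (mem_coe.mpr (mem_image_of_mem _ hv)))
    (fun j _ => List.mem_ofFn.mpr ⟨σ.symm j, σ.apply_symm_apply j⟩) hu fun m hm hlex => ?_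
  rw [List.map_ofFn, List.map_ofFn] at hlex
  exact @not_lt_of_ge _ lin.toPreorder _ _ (hmax m hm)
    ((hlin _ _).mpr ((lexLt_iff_lex_ofFn σ _ _).mpr hlex))

end Grid

theorem standard_monomials_eq_iterated_downshift_general {n k : ℕ}
    (V : Finset (Fin n → Fin k)) (σ : Equiv.Perm (Fin n))
    (lin : LinearOrder (Mon n)) (hlin : IsLexOrder σ lin) :
    stdMon lin (vanishIdeal ((V.image (toField ℚ) : Finset (Fin n → ℚ)) :
        Set (Fin n → ℚ)))
      = (((iterDownshift σ V).image toExp : Finset (Mon n)) : Set (Mon n)) := by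
  set I := vanishIdeal ((V.image (toField ℚ) : Finset (Fin n → ℚ)) : Set (Fin n → ℚ))
  set D := (iterDownshift σ V).image toExp
  have hD : (D : Set (Mon n)) ⊆ stdMon lin I := by
    intro m hm
    obtain ⟨u, hu, rfl⟩ := mem_image.mp hm
    exact toExp_mem_stdMon_of_mem_iterDownshift hlin hu
  have hcard : #D = #V := by
    rw [card_image_of_injective _ toExp_injective, iterDownshift, card_foldl_downshift]
  refine Set.Subset.antisymm (fun m hm => ?_) hD
  by_contra hmD
  have hle := card_le_of_subset_stdMon lin (V.image (toField ℚ)) (insert m D)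
    (by rw [coe_insert]; exact Set.insert_subset hm hD)
  rw [card_insert_of_notMem hmD, hcard] at hle
  exact absurd (hle.trans card_image_le) (by omega)

/-- Theorem `Smdownshiftgen`.
For positive `k, n`, a finite point set `𝒱 ⊆ {0,…,k-1}^n ⊆ ℚ^n` and the lex order `≺`
induced by `x_{σ 0} ≻ x_{σ 1} ≻ ⋯ ≻ x_{σ(n-1)}`, the standard monomials of `I(𝒱)`,
viewed as exponent vectors, are exactly `D_{σ(n-1),…,σ 0}(𝒱)`. -/
theorem standard_monomials_eq_iterated_downshift {n k : ℕ} (hn : 0 < n) (hk : 0 < k)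
    (V : Finset (Fin n → Fin k)) (σ : Equiv.Perm (Fin n))
    (lin : LinearOrder (Mon n)) (hlin : IsLexOrder σ lin) :
    stdMon lin (vanishIdeal ((V.image (toField ℚ) : Finset (Fin n → ℚ)) :
        Set (Fin n → ℚ)))
      = (((iterDownshift σ V).image toExp : Finset (Mon n)) : Set (Mon n)) :=
  standard_monomials_eq_iterated_downshift_general V σ lin hlin
end

section
/- For each 1 ≤ i ≤ n let ≺_i be an elimination order with respect to the variable x_i on the monomials of ℚ[x_1,…,x_n]. If a finite point set 𝒱 ⊆ {0,1,…,k−1}^n is not extremal, then there exist indices i ≠ j among 1,…,n such that the standard monomials of I(𝒱) with respect to ≺_i differ from the standard monomials of I(𝒱) with respect to ≺_j. Equivalently: if Sm(I(𝒱)) is the same for all of ≺_1,…,≺_n, then 𝒱 is extremal. -/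
open MvPolynomial

/-!
A monomial `x^m` is standard for `I(𝒱)` with respect to a term order `≺` exactly when the vector
of values of `x^m` on `𝒱` is not a combination of those of the `≺`-smaller monomials: the standard
monomials form the greedy basis of the functions on `𝒱` along `≺`.

If `≺` is graded by the exponent of `x_i`, then `x^t x_i^d`, with `x_i ∤ x^t`, is standard for `𝒱`
iff `x^t` is standard for the `d`-th layer of `𝒱`, the projection to `x_i = 0` of the points
lying on fibers in direction `x_i` with more than `d` points. One implication counts roots on a
fiber, the other interpolates along the fibers.

An elimination order for `x_i` is graded by `x_i`, so its standard set `T` spans, for every `E`,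
the same functions on `𝒱` as all monomials of `x_i`-degree at most `E`; for such `T`, refining the
order so that it compares `x_i`-degrees first does not change the greedy basis. If the elimination
orders for all the variables share `T`, then `T` has this property in every direction, the
property passes to the layers, and induction through the layers shows that every lexicographic
order has standard set `T`.
-/

variable {n : ℕ}

/-! ### Term orders -/

namespace IsTermOrder

variable {lin : LinearOrder (Mon n)}

theorem le_of_le (h : IsTermOrder lin) {u v : Mon n} (huv : u ≤ v) : lin.le u v := by
  simpa [tsub_add_cancel_of_le huv] using h.2 0 (v - u) u (h.1 (v - u))

theorem add_lt_add_right (h : IsTermOrder lin) {u v : Mon n} (w : Mon n) (huv : lin.lt u v) :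
    lin.lt (u + w) (v + w) :=
  @lt_of_le_of_ne _ lin.toPartialOrder _ _ (h.2 u v w (@le_of_lt _ lin.toPreorder _ _ huv))
    fun e => @ne_of_lt _ lin.toPreorder _ _ huv (add_right_cancel e)

theorem lt_of_add_lt_add_right (h : IsTermOrder lin) {u v w : Mon n}
    (huv : lin.lt (u + w) (v + w)) : lin.lt u v :=
  (@not_le _ lin _ _).1 fun hvu => (@not_le _ lin _ _).2 huv (h.2 v u w hvu)

theorem wellFounded (h : IsTermOrder lin) : WellFounded lin.lt := by
  rw [RelEmbedding.wellFounded_iff_isEmpty]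
  refine ⟨fun f => ?_⟩
  obtain ⟨a, b, hab, hle⟩ := wellQuasiOrdered_le f
  exact (@not_le _ lin _ _).2 (f.map_rel_iff.2 hab) (h.le_of_le hle)

end IsTermOrder

theorem IsElimOrder.lt_of_apply_lt {lin : LinearOrder (Mon n)} {i : Fin n}
    (h : IsElimOrder lin i) {u v : Mon n} (huv : u i < v i) : lin.lt u v := by
  have hu : lin.lt u (Finsupp.single i (u i + 1)) := by
    have := h.1.add_lt_add_right (Finsupp.single i (u i)) (h.2 (u.erase i) Finsupp.erase_same)
    rwa [Finsupp.erase_add_single, ← Finsupp.single_add, add_comm] at this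
  exact @lt_of_lt_of_le _ lin.toPreorder _ _ _ hu (h.1.le_of_le (Finsupp.single_le_iff.2 huv))

noncomputable abbrev gradedRefinement (lin : LinearOrder (Mon n)) (i : Fin n) :
    LinearOrder (Mon n) :=
  @LinearOrder.lift' (Mon n) (Lex (ℕ × Mon n)) (@Prod.Lex.instLinearOrder ℕ (Mon n) _ lin)
    (fun m => toLex (m i, m)) fun _ _ h => congrArg Prod.snd (toLex.injective h)

section gradedRefinement

variable {lin : LinearOrder (Mon n)} {i : Fin n} {u v : Mon n}

theorem gradedRefinement_lt_iff :
    (gradedRefinement lin i).lt u v ↔ u i < v i ∨ (u i = v i ∧ lin.lt u v) :=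
  @Prod.Lex.toLex_lt_toLex ℕ (Mon n) _ lin.toLT _ _

theorem gradedRefinement_le_iff :
    (gradedRefinement lin i).le u v ↔ u i < v i ∨ (u i = v i ∧ lin.le u v) :=
  @Prod.Lex.toLex_le_toLex ℕ (Mon n) _ lin.toLE _ _

theorem IsTermOrder.gradedRefinement (h : IsTermOrder lin) (i : Fin n) :
    IsTermOrder (gradedRefinement lin i) := by
  refine ⟨fun u => gradedRefinement_le_iff.2 ?_, fun u v w huv => gradedRefinement_le_iff.2 ?_⟩
  · rcases Nat.eq_zero_or_pos (u i) with h0 | h0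
    · exact Or.inr ⟨h0.symm, h.1 u⟩
    · exact Or.inl h0
  · simp only [Finsupp.coe_add, Pi.add_apply]
    rcases gradedRefinement_le_iff.1 huv with hlt | ⟨heq, hle⟩
    · exact Or.inl (by omega)
    · exact Or.inr ⟨by omega, h.2 u v w hle⟩

end gradedRefinement

def monomialsOn (A : Finset (Fin n)) : Set (Mon n) := {m | ∀ j ∉ A, m j = 0}

section monomialsOn

variable {A B : Finset (Fin n)} {i : Fin n} {u v : Mon n}

theorem monomialsOn_univ : monomialsOn (Finset.univ : Finset (Fin n)) = Set.univ := by
  ext m; simp [monomialsOn]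

theorem monomialsOn_empty : monomialsOn (∅ : Finset (Fin n)) = {0} := by
  ext m; simp [monomialsOn, Finsupp.ext_iff]

theorem monomialsOn_mono (h : A ⊆ B) : monomialsOn A ⊆ monomialsOn B :=
  fun _ hm j hj => hm j fun hjA => hj (h hjA)

theorem add_mem_monomialsOn (hu : u ∈ monomialsOn A) (hv : v ∈ monomialsOn A) :
    u + v ∈ monomialsOn A :=
  fun j hj => by simp [hu j hj, hv j hj]

theorem single_mem_monomialsOn (hi : i ∈ A) (d : ℕ) : Finsupp.single i d ∈ monomialsOn A :=
  fun j hj => Finsupp.single_eq_of_ne (by rintro rfl; exact hj hi)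

theorem erase_mem_monomialsOn (hu : u ∈ monomialsOn A) : u.erase i ∈ monomialsOn (A.erase i) := by
  intro j hj
  rcases eq_or_ne j i with rfl | hji
  · exact Finsupp.erase_same
  · rw [Finsupp.erase_ne hji]
    exact hu j fun hjA => hj (Finset.mem_erase.2 ⟨hji, hjA⟩)

theorem apply_eq_zero_of_mem_monomialsOn_erase (hu : u ∈ monomialsOn (A.erase i)) : u i = 0 :=
  hu i (Finset.notMem_erase i A)

end monomialsOn

def GradedOn (A : Finset (Fin n)) (i : Fin n) (lin : LinearOrder (Mon n)) : Prop :=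
  ∀ u ∈ monomialsOn A, ∀ v ∈ monomialsOn A, u i < v i → lin.lt u v

theorem GradedOn.apply_le_of_lt {A : Finset (Fin n)} {i : Fin n} {lin : LinearOrder (Mon n)}
    (hg : GradedOn A i lin) {u v : Mon n} (hu : u ∈ monomialsOn A) (hv : v ∈ monomialsOn A)
    (huv : lin.lt u v) : u i ≤ v i :=
  not_lt.1 fun h => @lt_asymm _ lin.toPreorder _ _ huv (hg v hv u hu h)

theorem gradedOn_gradedRefinement {A : Finset (Fin n)} {lin : LinearOrder (Mon n)} {i : Fin n} :
    GradedOn A i (gradedRefinement lin i) :=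
  fun _ _ _ _ h => gradedRefinement_lt_iff.2 (Or.inl h)

theorem IsElimOrder.gradedOn {lin : LinearOrder (Mon n)} {i : Fin n} (h : IsElimOrder lin i)
    (A : Finset (Fin n)) : GradedOn A i lin :=
  fun _ _ _ _ => h.lt_of_apply_lt

inductive IsLexGradedOn (lin : LinearOrder (Mon n)) : Finset (Fin n) → Prop
  | empty : IsLexGradedOn lin ∅
  | step {A : Finset (Fin n)} (i : Fin n) (hi : i ∈ A) (hg : GradedOn A i lin)
      (h : IsLexGradedOn lin (A.erase i)) : IsLexGradedOn lin A

namespace IsLexOrder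

variable {σ : Equiv.Perm (Fin n)} {lin : LinearOrder (Mon n)}

theorem le_iff (h : IsLexOrder σ lin) {u v : Mon n} :
    lin.le u v ↔ toLex (⇑u ∘ σ) ≤ toLex (⇑v ∘ σ) := by
  rw [@le_iff_lt_or_eq _ lin.toPartialOrder, h, le_iff_lt_or_eq]
  refine or_congr ⟨fun ⟨j, hlt, hj⟩ => ⟨j, hj, hlt⟩, fun ⟨j, hj, hlt⟩ => ⟨j, hlt, hj⟩⟩ ?_
  rw [toLex_inj, σ.surjective.injective_comp_right.eq_iff, DFunLike.coe_fn_eq]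

theorem isTermOrder (h : IsLexOrder σ lin) : IsTermOrder lin :=
  ⟨fun _ => h.le_iff.2 (Pi.toLex_monotone fun _ => Nat.zero_le _),
    fun _ _ w huv => h.le_iff.2 (add_le_add_left (h.le_iff.1 huv) (toLex (⇑w ∘ σ)))⟩

theorem isLexGradedOn (h : IsLexOrder σ lin) (A : Finset (Fin n)) : IsLexGradedOn lin A := by
  classical
  induction A using Finset.induction_on_min_value σ.symm with
  | empty => exact .empty
  | insert i A hiA hmin ih =>
    refine .step i (Finset.mem_insert_self i A) (fun u hu v hv huv => ?_) (by simpa [hiA] using ih)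
    refine (h u v).2 ⟨σ.symm i, by simpa using huv, fun l hl => ?_⟩
    have hlA : σ l ∉ insert i A := by
      simp only [Finset.mem_insert, not_or]
      refine ⟨fun e => hl.ne (by simp [← e]), fun hA => ?_⟩
      exact (hmin _ hA).not_gt (by simpa using hl)
    rw [hu _ hlA, hv _ hlA]

end IsLexOrder

/-! ### Greedy bases of the functions on a point set -/

open Submodule (span)

theorem LinearIndepOn.eq_of_subset_of_span_le {K ι V : Type*} [Field K] [AddCommGroup V]
    [Module K V] {f : ι → V} {B C : Set ι} (hB : LinearIndepOn K f B) (hCB : C ⊆ B)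
    (hspan : span K (f '' B) ≤ span K (f '' C)) : C = B := by
  refine hCB.antisymm fun b hb => by_contra fun hbC => hB.notMem_span hb ?_
  exact Submodule.span_mono (Set.image_mono (Set.subset_sdiff_singleton hCB hbC))
    (hspan (Submodule.subset_span ⟨b, hb, rfl⟩))

variable {K : Type*} [Field K]

noncomputable def evalVec (𝒱 : Finset (Fin n → K)) : MvPolynomial (Fin n) K →ₗ[K] (𝒱 → K) where
  toFun f v := eval v.1 f
  map_add' f g := by ext; simp
  map_smul' c f := by ext; simp

noncomputable abbrev monVec (𝒱 : Finset (Fin n → K)) (m : Mon n) : 𝒱 → K :=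
  evalVec 𝒱 (monomial m 1)

theorem monVec_mem_span_iff {𝒱 : Finset (Fin n → K)} {m : Mon n} {S : Set (Mon n)} :
    monVec 𝒱 m ∈ span K (monVec 𝒱 '' S) ↔
      ∃ f ∈ restrictSupport K S, ∀ v ∈ 𝒱, eval v f = eval v (monomial m 1) := by
  have hspan : span K (monVec 𝒱 '' S) = (restrictSupport K S).map (evalVec 𝒱) := by
    rw [restrictSupport_eq_span, Submodule.map_span, Set.image_image]
  rw [hspan, Submodule.mem_map]
  refine exists_congr fun f => and_congr_right fun _ => ?_
  simp [funext_iff, evalVec, monVec]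

def greedySet (lin : LinearOrder (Mon n)) (𝒱 : Finset (Fin n → K)) (R : Set (Mon n)) :
    Set (Mon n) :=
  {m | m ∈ R ∧ monVec 𝒱 m ∉ span K (monVec 𝒱 '' {r | r ∈ R ∧ lin.lt r m})}

section greedySet

variable {lin : LinearOrder (Mon n)} {𝒱 : Finset (Fin n → K)}

theorem monVec_mem_span_of_isLeadMon {f : MvPolynomial (Fin n) K}
    (hf : f ∈ vanishIdeal (𝒱 : Set (Fin n → K))) {m : Mon n} (hm : IsLeadMon lin f m) :
    monVec 𝒱 m ∈ span K (monVec 𝒱 '' {r | r ∈ Set.univ ∧ lin.lt r m}) := by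
  classical
  have hc : coeff m f ≠ 0 := mem_support_iff.1 hm.1
  refine monVec_mem_span_iff.2 ⟨monomial m 1 - C (coeff m f)⁻¹ * f, fun r hr => ?_,
    fun v hv => by simp [hf v hv]⟩
  have hr : coeff r (monomial m 1 - C (coeff m f)⁻¹ * f) ≠ 0 := mem_support_iff.1 hr
  rcases eq_or_ne r m with rfl | hrm
  · simp [hc] at hr
  · rw [coeff_sub, coeff_monomial, if_neg hrm.symm, coeff_C_mul, zero_sub, neg_ne_zero] at hr
    exact ⟨trivial, @lt_of_le_of_ne _ lin.toPartialOrder _ _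
      (hm.2 r (mem_support_iff.2 (right_ne_zero_of_mul hr))) hrm⟩

theorem exists_isLeadMon_of_monVec_mem_span {m : Mon n}
    (hm : monVec 𝒱 m ∈ span K (monVec 𝒱 '' {r | r ∈ Set.univ ∧ lin.lt r m})) :
    ∃ f ∈ vanishIdeal (𝒱 : Set (Fin n → K)), f ≠ 0 ∧ IsLeadMon lin f m := by
  classical
  obtain ⟨g, hg, hgv⟩ := monVec_mem_span_iff.1 hm
  have hgm : coeff m g = 0 :=
    notMem_support_iff.1 fun h => (@lt_irrefl _ lin.toPreorder m) (hg h).2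
  have hcoeff : coeff m (monomial m 1 - g) = 1 := by simp [hgm]
  refine ⟨monomial m 1 - g, fun v hv => by simp [hgv v hv], fun h => by simp [h] at hcoeff,
    mem_support_iff.2 (by simp [hcoeff]), fun r hr => ?_⟩
  rcases Finset.mem_union.1 (support_sub _ _ _ hr) with hr | hr
  · rw [Finset.mem_singleton.1 (support_monomial_subset hr)]
    exact @le_refl _ lin.toPreorder m
  · exact @le_of_lt _ lin.toPreorder _ _ (hg hr).2

theorem stdMon_vanishIdeal_eq_greedySet :
    stdMon lin (vanishIdeal (𝒱 : Set (Fin n → K))) = greedySet lin 𝒱 Set.univ := by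
  ext m
  refine ⟨fun hm => ⟨trivial, fun h => hm (exists_isLeadMon_of_monVec_mem_span h)⟩, ?_⟩
  rintro ⟨-, hm⟩ ⟨f, hf, -, hlead⟩
  exact hm (monVec_mem_span_of_isLeadMon hf hlead)

variable {R R' : Set (Mon n)}

theorem greedySet_subset : greedySet lin 𝒱 R ⊆ R := fun _ hm => hm.1

theorem greedySet_inter_subset : greedySet lin 𝒱 R ∩ R' ⊆ greedySet lin 𝒱 (R ∩ R') := by
  rintro m ⟨⟨hmR, hm⟩, hmR'⟩
  have hsub : {r | r ∈ R ∩ R' ∧ lin.lt r m} ⊆ {r | r ∈ R ∧ lin.lt r m} := fun r hr => ⟨hr.1.1, hr.2⟩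
  exact ⟨⟨hmR, hmR'⟩, fun hc => hm (Submodule.span_mono (Set.image_mono hsub) hc)⟩

theorem span_greedySet (hwf : WellFounded lin.lt) :
    span K (monVec 𝒱 '' greedySet lin 𝒱 R) = span K (monVec 𝒱 '' R) := by
  refine le_antisymm (Submodule.span_mono (Set.image_mono greedySet_subset))
    (Submodule.span_le.2 ?_)
  rintro _ ⟨m, hmR, rfl⟩
  induction m using hwf.induction with
  | _ m ih =>
    by_cases hm : m ∈ greedySet lin 𝒱 R
    · exact Submodule.subset_span ⟨m, hm, rfl⟩
    · have hspan := not_not.1 fun h => hm ⟨hmR, h⟩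
      refine Submodule.span_le.2 ?_ hspan
      rintro _ ⟨r, ⟨hrR, hrm⟩, rfl⟩
      exact ih r hrm hrR

theorem linearIndepOn_greedySet : LinearIndepOn K (monVec 𝒱) (greedySet lin 𝒱 R) := by
  classical
  refine linearIndepOn_of_finite _ fun t ht htfin => ?_
  obtain ⟨s, rfl⟩ := htfin.exists_finset_coe
  clear htfin
  induction s using @Finset.induction_on_max_value _ _ lin _ id with
  | empty => simp
  | insert m s hms hmax ih =>
    rw [Finset.coe_insert] at ht ⊢
    refine (ih ((Set.subset_insert _ _).trans ht)).insert fun hm =>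
      (ht (Set.mem_insert _ _)).2 (Submodule.span_mono (Set.image_mono fun r hr => ?_) hm)
    exact ⟨(ht (Set.mem_insert_of_mem _ hr)).1, @lt_of_le_of_ne _ lin.toPartialOrder _ _
      (hmax r hr) (ne_of_mem_of_not_mem hr hms)⟩

theorem greedySet_singleton (m₀ : Mon n) :
    greedySet lin 𝒱 {m₀} = {m | m = m₀ ∧ monVec 𝒱 m₀ ≠ 0} := by
  ext m
  refine and_congr_right fun (hm : m = m₀) => ?_
  subst hm
  have hempty : {r | r ∈ ({m} : Set (Mon n)) ∧ lin.lt r m} = ∅ :=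
    Set.eq_empty_of_forall_notMem fun r ⟨hr, hlt⟩ =>
      @lt_irrefl _ lin.toPreorder m (Set.mem_singleton_iff.1 hr ▸ hlt)
  rw [hempty, Set.image_empty, Submodule.span_empty, Submodule.mem_bot]

end greedySet

def SpansTruncations (A : Finset (Fin n)) (i : Fin n) (𝒱 : Finset (Fin n → K))
    (T : Set (Mon n)) : Prop :=
  ∀ E : ℕ, span K (monVec 𝒱 '' (T ∩ {m | m i ≤ E})) =
    span K (monVec 𝒱 '' (monomialsOn A ∩ {m | m i ≤ E}))

section SpansTruncations

variable {A : Finset (Fin n)} {i : Fin n} {𝒱 : Finset (Fin n → K)}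

theorem greedySet_inter_eq {lin : LinearOrder (Mon n)} (hg : GradedOn A i lin) (E : ℕ) :
    greedySet lin 𝒱 (monomialsOn A) ∩ {m | m i ≤ E} =
      greedySet lin 𝒱 (monomialsOn A ∩ {m | m i ≤ E}) := by
  refine greedySet_inter_subset.antisymm ?_
  rintro m ⟨⟨hmA, hmE⟩, hm⟩
  have hsub : {r | r ∈ monomialsOn A ∧ lin.lt r m} ⊆
      {r | r ∈ monomialsOn A ∩ {m | m i ≤ E} ∧ lin.lt r m} :=
    fun r ⟨hrA, hrm⟩ => ⟨⟨hrA, (hg.apply_le_of_lt hrA hmA hrm).trans hmE⟩, hrm⟩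
  exact ⟨⟨hmA, fun hc => hm (Submodule.span_mono (Set.image_mono hsub) hc)⟩, hmE⟩

theorem spansTruncations_greedySet {lin : LinearOrder (Mon n)} (hlin : IsTermOrder lin)
    (hg : GradedOn A i lin) : SpansTruncations A i 𝒱 (greedySet lin 𝒱 (monomialsOn A)) :=
  fun E => by rw [greedySet_inter_eq hg, span_greedySet hlin.wellFounded]

theorem greedySet_gradedRefinement {τ : LinearOrder (Mon n)} (hτ : IsTermOrder τ)
    (hT : SpansTruncations A i 𝒱 (greedySet τ 𝒱 (monomialsOn A))) :
    greedySet (gradedRefinement τ i) 𝒱 (monomialsOn A) = greedySet τ 𝒱 (monomialsOn A) := by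
  set T := greedySet τ 𝒱 (monomialsOn A)
  set S := greedySet (gradedRefinement τ i) 𝒱 (monomialsOn A)
  have hT_eq (E : ℕ) : T ∩ {m | m i ≤ E} = greedySet τ 𝒱 (monomialsOn A ∩ {m | m i ≤ E}) :=
    (linearIndepOn_greedySet (K := K)).eq_of_subset_of_span_le greedySet_inter_subset
      (by rw [span_greedySet hτ.wellFounded, hT E])
  have hST (E : ℕ) : S ∩ {m | m i ≤ E} ⊆ T ∩ {m | m i ≤ E} := by
    rintro m ⟨⟨hmA, hm⟩, hmE⟩
    -- among monomials of `x_i`-degree at most `m i`, the refinement and `τ` compare alike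
    have hsub : {r | r ∈ monomialsOn A ∩ {m' | m' i ≤ m i} ∧ τ.lt r m} ⊆
        {r | r ∈ monomialsOn A ∧ (gradedRefinement τ i).lt r m} := fun r ⟨⟨hrA, hri⟩, hrm⟩ =>
      ⟨hrA, gradedRefinement_lt_iff.2 ((lt_or_eq_of_le hri).imp_right fun h => ⟨h, hrm⟩)⟩
    have hmT : m ∈ greedySet τ 𝒱 (monomialsOn A ∩ {m' | m' i ≤ m i}) :=
      ⟨⟨hmA, le_refl (m i)⟩, fun hc => hm (Submodule.span_mono (Set.image_mono hsub) hc)⟩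
    rw [← hT_eq] at hmT
    exact ⟨hmT.1, hmE⟩
  have hS_eq (E : ℕ) : S ∩ {m | m i ≤ E} = T ∩ {m | m i ≤ E} :=
    ((linearIndepOn_greedySet (K := K)).mono Set.inter_subset_left).eq_of_subset_of_span_le
      (hST E) (by rw [hT E,
        spansTruncations_greedySet (hτ.gradedRefinement i) gradedOn_gradedRefinement E])
  ext m
  exact ⟨fun hm => ((hS_eq (m i)).subset ⟨hm, le_refl (m i)⟩).1,
    fun hm => ((hS_eq (m i)).superset ⟨hm, le_refl (m i)⟩).1⟩

end SpansTruncations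

/-! ### Polynomials in few variables, restriction to lines, interpolation -/

open scoped Pointwise in
theorem mul_mem_restrictSupport {s t S : Set (Mon n)} (hst : s + t ⊆ S)
    {f g : MvPolynomial (Fin n) K} (hf : f ∈ restrictSupport K s) (hg : g ∈ restrictSupport K t) :
    f * g ∈ restrictSupport K S :=
  restrictSupport_mono K hst (by rw [restrictSupport_add]; exact Submodule.mul_mem_mul hf hg)

theorem eval_eq_of_eqOn {A : Finset (Fin n)} {f : MvPolynomial (Fin n) K}
    (hf : f ∈ restrictSupport K (monomialsOn A)) {v w : Fin n → K} (h : Set.EqOn v w A) :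
    eval v f = eval w f :=
  eval₂_congr _ v w fun {j _} hj hc => h <| by_contra fun hjA =>
    Finsupp.mem_support_iff.1 hj (hf (mem_support_iff.2 hc) j hjA)

theorem eval_update_of_mem_restrictSupport {A : Finset (Fin n)} {i : Fin n}
    {f : MvPolynomial (Fin n) K} (hf : f ∈ restrictSupport K (monomialsOn (A.erase i)))
    (v : Fin n → K) (a : K) : eval (Function.update v i a) f = eval v f :=
  eval_eq_of_eqOn hf fun _ hj => Function.update_of_ne (Finset.ne_of_mem_erase hj) a v

theorem toMvPolynomial_mem_restrictSupport {A : Finset (Fin n)} {i : Fin n} (hi : i ∈ A)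
    {q : Polynomial K} {d : ℕ} (hq : q.natDegree < d) :
    q.toMvPolynomial i ∈ restrictSupport K {m | m ∈ monomialsOn A ∧ m i < d} := by
  rw [Polynomial.toMvPolynomial, Polynomial.aeval_eq_sum_range' hq]
  refine Submodule.sum_mem _ fun e he => Submodule.smul_mem _ _ ?_
  rw [X_pow_eq_monomial, monomial_mem_restrictSupport]
  exact Or.inl ⟨single_mem_monomialsOn hi e, by simpa using he⟩

theorem mem_restrictSupport_of_mem_supported {A : Finset (Fin n)} {f : MvPolynomial (Fin n) K}
    (hf : f ∈ supported K (A : Set (Fin n))) : f ∈ restrictSupport K (monomialsOn A) :=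
  fun r hr j hj => by_contra fun hrj => hj <|
    mem_supported.1 hf ((mem_vars_iff_mem_support j).2 ⟨r, hr, Finsupp.mem_support_iff.2 hrj⟩)

theorem exists_separating {A : Finset (Fin n)} {u w : Fin n → K} (hu : ∀ j ∉ A, u j = 0)
    (hw : ∀ j ∉ A, w j = 0) (hne : w ≠ u) :
    ∃ ℓ ∈ supported K (A : Set (Fin n)), eval u ℓ = 1 ∧ eval w ℓ = 0 := by
  obtain ⟨j, hj⟩ : ∃ j, u j ≠ w j := by
    by_contra! h
    exact hne (funext fun j => (h j).symm)
  have hjA : j ∈ A := by_contra fun hjA => hj (by rw [hu j hjA, hw j hjA])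
  refine ⟨C (u j - w j)⁻¹ * (X j - C (w j)), Subalgebra.mul_mem _ (Subalgebra.algebraMap_mem _ _)
    (Subalgebra.sub_mem _ (X_mem_supported.2 hjA) (Subalgebra.algebraMap_mem _ _)), ?_, by simp⟩
  simp [inv_mul_cancel₀ (sub_ne_zero.2 hj)]

theorem exists_indicator {A : Finset (Fin n)} {u : Fin n → K} (hu : ∀ j ∉ A, u j = 0)
    (W : Finset (Fin n → K)) (hW : ∀ w ∈ W, (∀ j ∉ A, w j = 0) ∧ w ≠ u) :
    ∃ δ ∈ supported K (A : Set (Fin n)), eval u δ = 1 ∧ ∀ w ∈ W, eval w δ = 0 := by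
  classical
  induction W using Finset.induction_on with
  | empty => exact ⟨1, Subalgebra.one_mem _, by simp, by simp⟩
  | insert w W _ ih =>
    obtain ⟨δ, hδ, hδu, hδW⟩ := ih fun w' hw' => hW w' (Finset.mem_insert_of_mem hw')
    obtain ⟨hw, hwu⟩ := hW w (Finset.mem_insert_self w W)
    obtain ⟨ℓ, hℓ, hℓu, hℓw⟩ := exists_separating hu hw hwu
    refine ⟨δ * ℓ, Subalgebra.mul_mem _ hδ hℓ, by simp [hδu, hℓu], fun w' hw' => ?_⟩
    rcases Finset.mem_insert.1 hw' with rfl | hw'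
    · simp [hℓw]
    · simp [hδW w' hw']

noncomputable def restrictToLine (i : Fin n) (u : Fin n → K) :
    MvPolynomial (Fin n) K →+* Polynomial K :=
  eval₂Hom Polynomial.C (Function.update (fun j => Polynomial.C (u j)) i Polynomial.X)

section restrictToLine

variable {i : Fin n} {u : Fin n → K}

theorem eval_restrictToLine (F : MvPolynomial (Fin n) K) (a : K) :
    (restrictToLine i u F).eval a = eval (Function.update u i a) F := by
  have hC : (Polynomial.evalRingHom a).comp Polynomial.C = RingHom.id K := by ext; simp
  have hX : Polynomial.evalRingHom a ∘ Function.update (fun j => Polynomial.C (u j)) i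
      Polynomial.X = Function.update u i a := by
    ext j
    rcases eq_or_ne j i with rfl | hj <;> simp [*]
  rw [restrictToLine, coe_eval₂Hom, ← Polynomial.coe_evalRingHom, eval₂_comp_left, hC, hX]
  rfl

theorem restrictToLine_monomial (r : Mon n) (c : K) :
    restrictToLine i u (monomial r c) =
      Polynomial.C (c * eval u (monomial (r.erase i) 1)) * Polynomial.X ^ r i := by
  rw [restrictToLine, eval₂Hom_monomial, eval_monomial, Finsupp.prod_fintype _ _ (by simp),
    Finsupp.prod_fintype _ _ (by simp), ← Finset.mul_prod_erase _ _ (Finset.mem_univ i),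
    ← Finset.mul_prod_erase _ _ (Finset.mem_univ i)]
  have hprod : ∏ j ∈ Finset.univ.erase i,
      Function.update (fun j => Polynomial.C (u j)) i Polynomial.X j ^ r j =
        Polynomial.C (∏ j ∈ Finset.univ.erase i, u j ^ (r.erase i) j) := by
    rw [map_prod]
    refine Finset.prod_congr rfl fun j hj => ?_
    have hji := Finset.ne_of_mem_erase hj
    simp [hji, Finsupp.erase_ne hji]
  rw [hprod]
  simp only [Function.update_self, Finsupp.erase_same, pow_zero, one_mul, map_mul]
  ring

theorem coeff_restrictToLine (F : MvPolynomial (Fin n) K) (e : ℕ) :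
    (restrictToLine i u F).coeff e =
      ∑ r ∈ F.support with r i = e, coeff r F * eval u (monomial (r.erase i) 1) := by
  conv_lhs => rw [F.as_sum]
  rw [map_sum, Polynomial.finsetSum_coeff, Finset.sum_filter]
  refine Finset.sum_congr rfl fun r _ => ?_
  rw [restrictToLine_monomial, Polynomial.coeff_C_mul_X_pow]
  exact if_congr eq_comm rfl rfl

theorem natDegree_restrictToLine_le {F : MvPolynomial (Fin n) K} {d : ℕ}
    (hF : ∀ r ∈ F.support, r i ≤ d) : (restrictToLine i u F).natDegree ≤ d :=
  Polynomial.natDegree_le_iff_coeff_eq_zero.2 fun e he => by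
    rw [coeff_restrictToLine]
    refine Finset.sum_eq_zero fun r hr => absurd (hF r (Finset.mem_filter.1 hr).1) ?_
    rw [(Finset.mem_filter.1 hr).2]
    exact_mod_cast not_le.2 he

end restrictToLine

theorem update_apply_eq_zero {A : Finset (Fin n)} {v : Fin n → K} (hv : ∀ j ∉ A, v j = 0)
    (i : Fin n) : ∀ j ∉ A.erase i, Function.update v i 0 j = 0 := by
  intro j hj
  rcases eq_or_ne j i with rfl | hji
  · exact Function.update_self ..
  · rw [Function.update_of_ne hji]
    exact hv j fun hjA => hj (Finset.mem_erase.2 ⟨hji, hjA⟩)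

theorem natDegree_interpolate_lt [DecidableEq K] {s : Finset K} (hs : s.Nonempty) {d : ℕ}
    (hd : s.card ≤ d) (r : K → K) : (Lagrange.interpolate s id r).natDegree < d := by
  rcases eq_or_ne (Lagrange.interpolate s id r) 0 with h0 | h0
  · rw [h0, Polynomial.natDegree_zero]
    exact hs.card_pos.trans_le hd
  · rw [Polynomial.natDegree_lt_iff_degree_lt h0]
    exact (Lagrange.degree_interpolate_lt _ (Set.injOn_id _)).trans_le (by exact_mod_cast hd)

section layer

variable [DecidableEq K]

def fiber (𝒱 : Finset (Fin n → K)) (i : Fin n) (u : Fin n → K) : Finset (Fin n → K) :=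
  {v ∈ 𝒱 | Function.update v i 0 = u}

/-- The projection to `x_i = 0` of the level `x_i = d` of the downshift `D_i(𝒱)`. -/
def layer (𝒱 : Finset (Fin n → K)) (i : Fin n) (d : ℕ) : Finset (Fin n → K) :=
  {u ∈ 𝒱.image (Function.update · i 0) | d < (fiber 𝒱 i u).card}

variable {𝒱 : Finset (Fin n → K)} {i : Fin n} {u v : Fin n → K}

theorem update_eq_of_mem_fiber (hv : v ∈ fiber 𝒱 i u) : Function.update u i (v i) = v := by
  rw [← (Finset.mem_filter.1 hv).2, Function.update_idem, Function.update_eq_self]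

theorem card_image_fiber : ((fiber 𝒱 i u).image (· i)).card = (fiber 𝒱 i u).card :=
  Finset.card_image_of_injOn fun v hv w hw (h : v i = w i) => by
    rw [← update_eq_of_mem_fiber hv, ← update_eq_of_mem_fiber hw, h]

theorem layer_supported {A : Finset (Fin n)} (h𝒱 : ∀ v ∈ 𝒱, ∀ j ∉ A, v j = 0) (d : ℕ) :
    ∀ u ∈ layer 𝒱 i d, ∀ j ∉ A.erase i, u j = 0 := by
  intro u hu
  obtain ⟨v, hv, rfl⟩ := Finset.mem_image.1 (Finset.mem_filter.1 hu).1
  exact update_apply_eq_zero (h𝒱 v hv) i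

end layer

open scoped Pointwise in
theorem exists_interpolant_pow_off_layer [DecidableEq K] {A : Finset (Fin n)} {i : Fin n} (hi : i ∈ A)
    {𝒱 : Finset (Fin n → K)} (h𝒱 : ∀ v ∈ 𝒱, ∀ j ∉ A, v j = 0) (d : ℕ) :
    ∃ H ∈ restrictSupport K {r | r ∈ monomialsOn A ∧ r i < d},
      ∀ v ∈ 𝒱, Function.update v i 0 ∉ layer 𝒱 i d → eval v H = v i ^ d := by
  set U := 𝒱.image (Function.update · i 0)
  have hU : ∀ u ∈ U, ∀ j ∉ A.erase i, u j = 0 := by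
    intro u hu
    obtain ⟨v, hv, rfl⟩ := Finset.mem_image.1 hu
    exact update_apply_eq_zero (h𝒱 v hv) i
  choose! δ hδ hδu hδw using fun u (hu : u ∈ U) => exists_indicator (hU u hu) (U.erase u)
    fun w hw => ⟨hU w (Finset.mem_of_mem_erase hw), Finset.ne_of_mem_erase hw⟩
  set L : (Fin n → K) → Polynomial K := fun u =>
    Lagrange.interpolate ((fiber 𝒱 i u).image (· i)) id fun a => a ^ d
  refine ⟨∑ u ∈ U \ layer 𝒱 i d, δ u * (L u).toMvPolynomial i,
    Submodule.sum_mem _ fun u hu => ?_, fun v hv hvd => ?_⟩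
  · obtain ⟨huU, hud⟩ := Finset.mem_sdiff.1 hu
    have hcard : (fiber 𝒱 i u).card ≤ d :=
      not_lt.1 fun h => hud (Finset.mem_filter.2 ⟨huU, h⟩)
    have hne : ((fiber 𝒱 i u).image (· i)).Nonempty := by
      obtain ⟨v, hv, rfl⟩ := Finset.mem_image.1 huU
      exact ⟨v i, Finset.mem_image_of_mem _ (Finset.mem_filter.2 ⟨hv, rfl⟩)⟩
    have hL : (L u).natDegree < d :=
      natDegree_interpolate_lt hne (card_image_fiber.trans_le hcard) _
    refine mul_mem_restrictSupport ?_ (mem_restrictSupport_of_mem_supported (hδ u huU))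
      (toMvPolynomial_mem_restrictSupport hi hL)
    rintro _ ⟨a, ha, b, ⟨hbA, hbd⟩, rfl⟩
    refine ⟨add_mem_monomialsOn (monomialsOn_mono (A.erase_subset i) ha) hbA, ?_⟩
    simpa [apply_eq_zero_of_mem_monomialsOn_erase ha] using hbd
  · have hvU : Function.update v i 0 ∈ U := Finset.mem_image_of_mem _ hv
    have heval : ∀ u ∈ U, eval v (δ u) = eval (Function.update v i 0) (δ u) := fun u hu =>
      (eval_update_of_mem_restrictSupport (mem_restrictSupport_of_mem_supported (hδ u hu)) v 0).symm
    rw [map_sum, Finset.sum_eq_single (Function.update v i 0)]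
    · rw [map_mul, heval _ hvU, hδu _ hvU, one_mul, eval_toMvPolynomial]
      exact Lagrange.eval_interpolate_at_node _ (Set.injOn_id _)
        (Finset.mem_image_of_mem _ (Finset.mem_filter.2 ⟨hv, rfl⟩))
    · intro u hu hne
      rw [map_mul, heval _ (Finset.mem_sdiff.1 hu).1,
        hδw _ (Finset.mem_sdiff.1 hu).1 _ (Finset.mem_erase.2 ⟨hne.symm, hvU⟩), zero_mul]
    · exact fun h => absurd (Finset.mem_sdiff.2 ⟨hvU, hvd⟩) h

/-! ### Decomposition along the layers -/

section decomposition

variable [DecidableEq K] {A : Finset (Fin n)} {i : Fin n} {lin : LinearOrder (Mon n)}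
  {𝒱 : Finset (Fin n → K)} {t : Mon n} {d : ℕ}

theorem monVec_layer_mem_span_of_mem_span (hlin : IsTermOrder lin) (hi : i ∈ A) (hg : GradedOn A i lin)
    (ht : t ∈ monomialsOn (A.erase i))
    (h : monVec 𝒱 (t + Finsupp.single i d) ∈
      span K (monVec 𝒱 '' {r | r ∈ monomialsOn A ∧ lin.lt r (t + Finsupp.single i d)})) :
    monVec (layer 𝒱 i d) t ∈
      span K (monVec (layer 𝒱 i d) '' {r | r ∈ monomialsOn (A.erase i) ∧ lin.lt r t}) := by
  obtain ⟨f, hf, hfv⟩ := monVec_mem_span_iff.1 h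
  have hti : t i = 0 := apply_eq_zero_of_mem_monomialsOn_erase ht
  have hmA : t + Finsupp.single i d ∈ monomialsOn A :=
    add_mem_monomialsOn (monomialsOn_mono (A.erase_subset i) ht) (single_mem_monomialsOn hi d)
  have hdeg : ∀ r ∈ (monomial (t + Finsupp.single i d) 1 - f).support, r i ≤ d := by
    intro r hr
    rcases Finset.mem_union.1 (support_sub _ _ _ hr) with hr | hr
    · simp [Finset.mem_singleton.1 (support_monomial_subset hr), hti]
    · simpa [hti] using hg.apply_le_of_lt (hf hr).1 hmA (hf hr).2
  refine monVec_mem_span_iff.2 ⟨∑ r ∈ f.support with r i = d, monomial (r.erase i) (coeff r f),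
    Submodule.sum_mem _ fun r hr => ?_, fun u hu => ?_⟩
  · obtain ⟨hrf, hrd⟩ := Finset.mem_filter.1 hr
    refine (monomial_mem_restrictSupport K).2 (Or.inl ⟨erase_mem_monomialsOn (hf hrf).1,
      hlin.lt_of_add_lt_add_right (w := Finsupp.single i d) ?_⟩)
    have hr_eq : r.erase i + Finsupp.single i d = r := hrd ▸ Finsupp.erase_add_single i r
    rw [hr_eq]
    exact (hf hrf).2
  -- on the fiber above `u`, `x^t x_i^d - f` restricts to a polynomial of degree `≤ d`
  -- with more than `d` roots
  have hzero : restrictToLine i u (monomial (t + Finsupp.single i d) 1 - f) = 0 := by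
    refine Polynomial.eq_zero_of_natDegree_lt_card_of_eval_eq_zero' _
      ((fiber 𝒱 i u).image (· i)) (Finset.forall_mem_image.2 fun v hv => ?_) ?_
    · rw [eval_restrictToLine, update_eq_of_mem_fiber hv, map_sub,
        hfv v (Finset.mem_filter.1 hv).1, sub_self]
    · rw [card_image_fiber]
      exact (natDegree_restrictToLine_le hdeg).trans_lt (Finset.mem_filter.1 hu).2
  have hcoeff := congrArg (Polynomial.coeff · d) hzero
  simp only [map_sub, Polynomial.coeff_sub, restrictToLine_monomial, coeff_restrictToLine,
    Polynomial.coeff_C_mul_X_pow] at hcoeff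
  have hm_erase : (t + Finsupp.single i d).erase i = t := by
    ext j
    rcases eq_or_ne j i with rfl | hji
    · simp [hti]
    · simp [Finsupp.erase_ne hji]
  simp only [hm_erase, Finsupp.add_apply, hti, Finsupp.single_eq_same, zero_add, if_true,
    one_mul, Polynomial.coeff_zero, sub_eq_zero] at hcoeff
  rw [hcoeff, map_sum]
  simp only [eval_monomial, one_mul]

open scoped Pointwise in
theorem monVec_mem_span_of_layer_mem_span (hlin : IsTermOrder lin) (hi : i ∈ A) (hg : GradedOn A i lin)
    (h𝒱 : ∀ v ∈ 𝒱, ∀ j ∉ A, v j = 0) (ht : t ∈ monomialsOn (A.erase i))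
    (h : monVec (layer 𝒱 i d) t ∈
      span K (monVec (layer 𝒱 i d) '' {r | r ∈ monomialsOn (A.erase i) ∧ lin.lt r t})) :
    monVec 𝒱 (t + Finsupp.single i d) ∈
      span K (monVec 𝒱 '' {r | r ∈ monomialsOn A ∧ lin.lt r (t + Finsupp.single i d)}) := by
  obtain ⟨g, hg', hgv⟩ := monVec_mem_span_iff.1 h
  obtain ⟨H, hH, hHv⟩ := exists_interpolant_pow_off_layer hi h𝒱 d
  have hti : t i = 0 := apply_eq_zero_of_mem_monomialsOn_erase ht
  have hmA : t + Finsupp.single i d ∈ monomialsOn A :=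
    add_mem_monomialsOn (monomialsOn_mono (A.erase_subset i) ht) (single_mem_monomialsOn hi d)
  have hG : monomial t 1 - g ∈ restrictSupport K (monomialsOn (A.erase i)) :=
    Submodule.sub_mem _ ((monomial_mem_restrictSupport K).2 (Or.inl ht))
      (restrictSupport_mono K (fun r hr => hr.1) hg')
  -- `x^t x_i^d ≡ H (x^t - g) + x_i^d g` on `𝒱`: above the layer `x^t - g` vanishes, elsewhere
  -- `H = x_i^d`
  refine monVec_mem_span_iff.2 ⟨H * (monomial t 1 - g) + X i ^ d * g,
    Submodule.add_mem _ (mul_mem_restrictSupport ?_ hH hG) (mul_mem_restrictSupport ?_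
      (X_pow_eq_monomial (R := K) ▸ (monomial_mem_restrictSupport K).2 (Or.inl rfl)) hg'),
    fun v hv => ?_⟩
  · rintro _ ⟨a, ⟨haA, had⟩, b, hb, rfl⟩
    have hab : a + b ∈ monomialsOn A :=
      add_mem_monomialsOn haA (monomialsOn_mono (A.erase_subset i) hb)
    refine ⟨hab, hg _ hab _ hmA ?_⟩
    simpa [apply_eq_zero_of_mem_monomialsOn_erase hb, hti] using had
  · rintro _ ⟨a, rfl, b, ⟨hbA, hbt⟩, rfl⟩
    refine ⟨add_mem_monomialsOn (single_mem_monomialsOn hi d)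
      (monomialsOn_mono (A.erase_subset i) hbA), ?_⟩
    show lin.lt (Finsupp.single i d + b) (t + Finsupp.single i d)
    rw [add_comm (Finsupp.single i d)]
    exact hlin.add_lt_add_right _ hbt
  have hmon : monomial (t + Finsupp.single i d) (1 : K) = monomial t 1 * X i ^ d := by
    rw [X_pow_eq_monomial, monomial_mul, one_mul]
  have hGv := eval_update_of_mem_restrictSupport hG v 0
  rw [hmon]
  by_cases hvd : Function.update v i 0 ∈ layer 𝒱 i d
  · rw [map_sub, hgv _ hvd, sub_self, map_sub] at hGv
    simp only [map_add, map_mul, map_sub, map_pow, eval_X]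
    linear_combination (v i ^ d - eval v H) * hGv
  · simp only [map_add, map_mul, map_sub, map_pow, eval_X, hHv v hv hvd]
    ring

theorem add_single_mem_greedySet_iff (hlin : IsTermOrder lin) (hi : i ∈ A)
    (hg : GradedOn A i lin) (h𝒱 : ∀ v ∈ 𝒱, ∀ j ∉ A, v j = 0) (ht : t ∈ monomialsOn (A.erase i)) :
    t + Finsupp.single i d ∈ greedySet lin 𝒱 (monomialsOn A) ↔
      t ∈ greedySet lin (layer 𝒱 i d) (monomialsOn (A.erase i)) :=
  ⟨fun ⟨_, hm⟩ => ⟨ht, fun h => hm (monVec_mem_span_of_layer_mem_span hlin hi hg h𝒱 ht h)⟩,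
    fun ⟨_, ht'⟩ => ⟨add_mem_monomialsOn (monomialsOn_mono (A.erase_subset i) ht)
      (single_mem_monomialsOn hi d), fun h => ht' (monVec_layer_mem_span_of_mem_span hlin hi hg ht h)⟩⟩

theorem greedySet_eq_iff_forall_layer {lin₁ lin₂ : LinearOrder (Mon n)} (hlin₁ : IsTermOrder lin₁)
    (hg₁ : GradedOn A i lin₁) (hlin₂ : IsTermOrder lin₂) (hg₂ : GradedOn A i lin₂) (hi : i ∈ A)
    (h𝒱 : ∀ v ∈ 𝒱, ∀ j ∉ A, v j = 0) :
    greedySet lin₁ 𝒱 (monomialsOn A) = greedySet lin₂ 𝒱 (monomialsOn A) ↔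
      ∀ d, greedySet lin₁ (layer 𝒱 i d) (monomialsOn (A.erase i)) =
        greedySet lin₂ (layer 𝒱 i d) (monomialsOn (A.erase i)) := by
  constructor
  · intro h d
    ext t
    by_cases ht : t ∈ monomialsOn (A.erase i)
    · rw [← add_single_mem_greedySet_iff hlin₁ hi hg₁ h𝒱 ht,
        ← add_single_mem_greedySet_iff hlin₂ hi hg₂ h𝒱 ht, h]
    · exact iff_of_false (fun h => ht (greedySet_subset h)) fun h => ht (greedySet_subset h)
  · intro h
    ext m
    by_cases hm : m ∈ monomialsOn A
    · rw [← Finsupp.erase_add_single i m,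
        add_single_mem_greedySet_iff hlin₁ hi hg₁ h𝒱 (erase_mem_monomialsOn hm),
        add_single_mem_greedySet_iff hlin₂ hi hg₂ h𝒱 (erase_mem_monomialsOn hm), h]
    · exact iff_of_false (fun h => hm (greedySet_subset h)) fun h => hm (greedySet_subset h)

theorem spansTruncations_layer {τ : LinearOrder (Mon n)} (hτ : IsTermOrder τ) (hi : i ∈ A)
    (h𝒱 : ∀ v ∈ 𝒱, ∀ j ∉ A, v j = 0) {j : Fin n}
    (hTi : SpansTruncations A i 𝒱 (greedySet τ 𝒱 (monomialsOn A)))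
    (hTj : SpansTruncations A j 𝒱 (greedySet τ 𝒱 (monomialsOn A))) :
    SpansTruncations (A.erase i) j (layer 𝒱 i d)
      (greedySet (gradedRefinement τ i) (layer 𝒱 i d) (monomialsOn (A.erase i))) := by
  -- refining first by `x_j` and then by `x_i` gives an order that is graded by `x_j` on
  -- monomials free of `x_i`, with the same greedy sets as refining by `x_i` alone
  set σ := gradedRefinement (gradedRefinement τ j) i
  have hτj : IsTermOrder (gradedRefinement τ j) := hτ.gradedRefinement j
  have hσ : IsTermOrder σ := hτj.gradedRefinement i
  have hj_eq := greedySet_gradedRefinement hτ hTj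
  have hσ_eq : greedySet σ 𝒱 (monomialsOn A) =
      greedySet (gradedRefinement τ i) 𝒱 (monomialsOn A) := by
    rw [greedySet_gradedRefinement hτj (hj_eq ▸ hTi), hj_eq, greedySet_gradedRefinement hτ hTi]
  have hσj : GradedOn (A.erase i) j σ := fun u hu v hv huv =>
    gradedRefinement_lt_iff.2 (Or.inr ⟨by rw [apply_eq_zero_of_mem_monomialsOn_erase hu,
      apply_eq_zero_of_mem_monomialsOn_erase hv], gradedRefinement_lt_iff.2 (Or.inl huv)⟩)
  rw [← (greedySet_eq_iff_forall_layer hσ gradedOn_gradedRefinement (hτ.gradedRefinement i)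
    gradedOn_gradedRefinement hi h𝒱).1 hσ_eq]
  exact spansTruncations_greedySet hσ hσj

end decomposition

theorem greedySet_eq_of_isLexGradedOn [DecidableEq K] {lin : LinearOrder (Mon n)}
    (hlin : IsTermOrder lin) {A : Finset (Fin n)} (hA : IsLexGradedOn lin A)
    {𝒱 : Finset (Fin n → K)} (h𝒱 : ∀ v ∈ 𝒱, ∀ j ∉ A, v j = 0) {τ : LinearOrder (Mon n)}
    (hτ : IsTermOrder τ) (hT : ∀ i ∈ A, SpansTruncations A i 𝒱 (greedySet τ 𝒱 (monomialsOn A))) :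
    greedySet lin 𝒱 (monomialsOn A) = greedySet τ 𝒱 (monomialsOn A) := by
  induction hA generalizing 𝒱 τ with
  | empty => rw [monomialsOn_empty, greedySet_singleton, greedySet_singleton]
  | step i hi hg _ ih =>
    rw [← greedySet_gradedRefinement hτ (hT i hi)]
    refine (greedySet_eq_iff_forall_layer hlin hg (hτ.gradedRefinement i)
      gradedOn_gradedRefinement hi h𝒱).2 fun d => ih (layer_supported h𝒱 d)
        (hτ.gradedRefinement i) fun j hj => ?_
    exact spansTruncations_layer hτ hi h𝒱 (hT i hi) (hT j (Finset.mem_of_mem_erase hj))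

theorem stdMon_eq_of_isLexOrder [DecidableEq K] {𝒱 : Finset (Fin n → K)}
    {τ : LinearOrder (Mon n)} (hτ : IsTermOrder τ)
    (hT : ∀ i, SpansTruncations Finset.univ i 𝒱 (greedySet τ 𝒱 (monomialsOn Finset.univ)))
    {σ : Equiv.Perm (Fin n)} {lin : LinearOrder (Mon n)} (hlin : IsLexOrder σ lin) :
    stdMon lin (vanishIdeal (𝒱 : Set (Fin n → K))) =
      stdMon τ (vanishIdeal (𝒱 : Set (Fin n → K))) := by
  rw [stdMon_vanishIdeal_eq_greedySet, stdMon_vanishIdeal_eq_greedySet, ← monomialsOn_univ]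
  exact greedySet_eq_of_isLexGradedOn hlin.isTermOrder (hlin.isLexGradedOn _) (by simp) hτ
    fun i _ => hT i

/-- Theorem `genalgothm`.
For each `i` let `≺ᵢ` be an elimination order with respect to `xᵢ`. If a finite point
set `𝒱 ⊆ {0,…,k-1}^n` is not extremal, then among `≺₁,…,≺ₙ` there are two term orders
for which the standard monomials of `I(𝒱)` differ. -/
theorem not_extremal_exists_differing_elimination_orders {n k : ℕ}
    (V : Finset (Fin n → Fin k))
    (lin : Fin n → LinearOrder (Mon n)) (hlin : ∀ i : Fin n, IsElimOrder (lin i) i)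
    (hne : ¬ IsExtremal ((V.image (toField ℚ) : Finset (Fin n → ℚ)) : Set (Fin n → ℚ))) :
    ∃ i j : Fin n, i ≠ j ∧
      stdMon (lin i) (vanishIdeal ((V.image (toField ℚ) : Finset (Fin n → ℚ)) :
          Set (Fin n → ℚ))) ≠
        stdMon (lin j) (vanishIdeal ((V.image (toField ℚ) : Finset (Fin n → ℚ)) :
          Set (Fin n → ℚ))) := by
  set 𝒱 := V.image (toField ℚ)
  by_contra! hcon
  refine hne fun σ₁ σ₂ lin₁ lin₂ h₁ h₂ => ?_
  rcases isEmpty_or_nonempty (Fin n) with _ | ⟨⟨i₀⟩⟩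
  · exact stdMon_eq_of_isLexOrder h₂.isTermOrder (fun i => isEmptyElim i) h₁
  · have hT (i : Fin n) :
        SpansTruncations Finset.univ i 𝒱 (greedySet (lin i₀) 𝒱 (monomialsOn Finset.univ)) := by
      have hstd : stdMon (lin i) (vanishIdeal (𝒱 : Set (Fin n → ℚ))) =
          stdMon (lin i₀) (vanishIdeal (𝒱 : Set (Fin n → ℚ))) := by
        rcases eq_or_ne i i₀ with rfl | hi
        · rfl
        · exact hcon i i₀ hi
      rw [monomialsOn_univ, ← stdMon_vanishIdeal_eq_greedySet, ← hstd,
        stdMon_vanishIdeal_eq_greedySet, ← monomialsOn_univ]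
      exact spansTruncations_greedySet (hlin i).1 ((hlin i).gradedOn _)
    rw [stdMon_eq_of_isLexOrder (hlin i₀).1 hT h₁, stdMon_eq_of_isLexOrder (hlin i₀).1 hT h₂]
end
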